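/- Let R be a finite commutative local ring, and let f(x), g(x) be nonzero polynomials in R[x] with g(x) regular. Then there exist polynomials q(x), r(x) in R[x] such that f(x) = g(x)q(x) + r(x) and the degree of the reduction of r modulo the maximal ideal is strictly less than the degree of the reduction of g modulo the maximal ideal (or r = 0). -/

import Mathlib

/-!
Divide the reductions in `(R/M)[x]`, where `R/M` is a field, lift the quotient `q`, and take
`r = f - g q`: the reduction of `r` is the remainder over `R/M`. This needs `ḡ ≠ 0`, which holds
because `M` is the nilradical of the Artinian local ring `R`, so a `g` with `ḡ = 0` would be
nilpotent, and a nilpotent polynomial is a zero divisor.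
-/

open Polynomial

theorem Polynomial.exists_eq_mul_add_degree_map_lt {R K : Type*} [CommRing R] [Field K]
    {φ : R →+* K} (hφ : Function.Surjective φ) (p : R[X]) {g : R[X]} (hg : g.map φ ≠ 0) :
    ∃ q r : R[X], p = g * q + r ∧ (r.map φ).degree < (g.map φ).degree := by
  obtain ⟨q, hq⟩ := map_surjective φ hφ (p.map φ / g.map φ)
  refine ⟨q, p - g * q, by ring, ?_⟩
  rw [Polynomial.map_sub, Polynomial.map_mul, hq, ← EuclideanDomain.mod_eq_sub_mul_div]
  exact degree_mod_lt _ hg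

theorem Polynomial.map_ne_zero_of_ker_le_nilradical {R S : Type*} [CommRing R] [Nontrivial R]
    [Semiring S] {φ : R →+* S} (hφ : RingHom.ker φ ≤ nilradical R) {g : R[X]}
    (hg : g ∈ nonZeroDivisors R[X]) : g.map φ ≠ 0 := by
  intro h
  obtain ⟨n, hn⟩ : IsNilpotent g := Polynomial.isNilpotent_iff.mpr fun i ↦
    hφ <| by rw [RingHom.mem_ker, ← coeff_map, h, coeff_zero]
  exact zero_notMem_nonZeroDivisors (hn ▸ pow_mem hg n)

theorem stmt1 {R : Type*} [CommRing R] [Finite R] [IsLocalRing R]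
    (f g : R[X]) (hg : g ∈ nonZeroDivisors R[X]) :
    ∃ q r : R[X], f = g * q + r ∧
      (r = 0 ∨
        (r.map (Ideal.Quotient.mk (IsLocalRing.maximalIdeal R))).degree <
          (g.map (Ideal.Quotient.mk (IsLocalRing.maximalIdeal R))).degree) := by
  have hker : RingHom.ker (Ideal.Quotient.mk (IsLocalRing.maximalIdeal R)) ≤ nilradical R := by
    rw [Ideal.mk_ker, Ring.KrullDimLE.nilradical_eq_maximalIdeal]
  obtain ⟨q, r, hfr, hr⟩ := @exists_eq_mul_add_degree_map_lt _ _ _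
    (Ideal.Quotient.field _) _ Ideal.Quotient.mk_surjective f _
    (map_ne_zero_of_ker_le_nilradical hker hg)
  exact ⟨q, r, hfr, Or.inr hr⟩
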